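/- arXiv:1812.03713 — 2 statements merged into one kernel-verified Lean document; each statement's English description precedes it below -/
import Mathlib

section
/- Let (D, M) be a local integral domain. Then D is a t-local domain in each of the following situations: (1) M is minimal over an integral t-ideal of D; (2) M is an associated prime over a principal ideal, i.e., there exist a ∈ D, a ≠ 0, and b ∈ D \ aD such that M is minimal over the ideal (aD :_D bD) = {r ∈ D : rb ∈ aD}; (3) M is minimal over a nonzero principal ideal of D; (4) M is principal; (5) D is 1-dimensional (Krull dimension of D equals 1). -/
/-!
Write `Fᵛ = (F⁻¹)⁻¹`. Let `I` be a `t`-ideal of the local domain `(D, M)` with `M = √I`, and let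
`F ⊆ M` be finitely generated. If `Fᵛ ⊄ M`, then `Fᵛ = D` because `D` is local, so
`F⁻¹ = (Fᵛ)⁻¹ = D`, and then `(Fⁿ)⁻¹ = D` for every `n`. As `F ⊆ √I` is finitely generated,
some `Fⁿ ⊆ I`, whence `D = (Fⁿ)ᵛ ⊆ Iᵗ = I`, which is absurd; so `M` is a `t`-ideal. The other
cases reduce to this one: principal ideals and `(aD :_D bD) = (a/b)D ∩ D` are divisorial, hence
`t`-ideals, and in a one-dimensional local domain `M = √(xD)` for every nonzero `x ∈ M`.
-/

open scoped nonZeroDivisors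

/-- The `t`-closure of a fractional ideal `E` of an integral domain `D`:
the union (here: supremum, which is a directed union) of `F^v = (F⁻¹)⁻¹` over all
nonzero finitely generated fractional subideals `F` of `E`, viewed as a
`D`-submodule of the fraction field of `D`. -/
noncomputable def tClos (D : Type*) [CommRing D] [IsDomain D]
    (E : FractionalIdeal D⁰ (FractionRing D)) : Submodule D (FractionRing D) :=
  ⨆ F ∈ {F : FractionalIdeal D⁰ (FractionRing D) |
      F ≠ 0 ∧ F ≤ E ∧ (F : Submodule D (FractionRing D)).FG},
    (((F⁻¹)⁻¹ : FractionalIdeal D⁰ (FractionRing D)) : Submodule D (FractionRing D))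

/-- An integral ideal `I` of an integral domain `D` is a `t`-ideal if `I = I^t`. -/
def Ideal.IsT {D : Type*} [CommRing D] [IsDomain D] (I : Ideal D) : Prop :=
  ((I : FractionalIdeal D⁰ (FractionRing D)) : Submodule D (FractionRing D)) = tClos D I

namespace FractionalIdeal

variable {D K : Type*} [CommRing D] [Field K] [Algebra D K] [IsFractionRing D K]
  {I J : FractionalIdeal D⁰ K}

theorem eq_one_of_le_one_of_not_le_maximalIdeal [IsLocalRing D] (h : I ≤ 1)
    (hM : ¬ I ≤ (IsLocalRing.maximalIdeal D : FractionalIdeal D⁰ K)) : I = 1 := by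
  obtain ⟨J, rfl⟩ := le_one_iff_exists_coeIdeal.mp h
  rw [coeIdeal_le_coeIdeal] at hM
  rw [← coeIdeal_top, not_imp_comm.mp IsLocalRing.le_maximalIdeal hM]

variable [IsDomain D]

theorem inv_eq_zero_iff : I⁻¹ = 0 ↔ I = 0 := by
  refine ⟨fun h => ?_, fun h => by rw [h, inv_zero']⟩
  by_contra hI
  have hden := den_mem_inv hI
  rw [h, mem_zero_iff] at hden
  exact IsFractionRing.to_map_ne_zero_of_mem_nonZeroDivisors I.den.2 hden

theorem le_inv_inv (I : FractionalIdeal D⁰ K) : I ≤ I⁻¹⁻¹ := by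
  rcases eq_or_ne I 0 with rfl | hI
  · exact zero_le _
  intro x hx
  rw [mem_inv_iff (inv_eq_zero_iff.not.mpr hI)]
  intro y hy
  rw [mul_comm]
  exact (mem_inv_iff hI).mp hy x hx

theorem inv_inv_mono (h : I ≤ J) : I⁻¹⁻¹ ≤ J⁻¹⁻¹ := by
  rcases eq_or_ne I 0 with rfl | hI
  · simp only [inv_zero', zero_le]
  have hJ : J ≠ 0 := fun hJ => hI (le_antisymm (hJ ▸ h) (zero_le _))
  exact inv_anti_mono (inv_eq_zero_iff.not.mpr hJ) (inv_eq_zero_iff.not.mpr hI)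
    (inv_anti_mono hI hJ h)

theorem inv_inv_inv (I : FractionalIdeal D⁰ K) : I⁻¹⁻¹⁻¹ = I⁻¹ := by
  rcases eq_or_ne I 0 with rfl | hI
  · simp only [inv_zero']
  refine le_antisymm ?_ (le_inv_inv _)
  exact inv_anti_mono hI (inv_eq_zero_iff.not.mpr (inv_eq_zero_iff.not.mpr hI)) (le_inv_inv I)

theorem inv_inv_spanSingleton (x : K) : (spanSingleton D⁰ x)⁻¹⁻¹ = spanSingleton D⁰ x := by
  rw [spanSingleton_inv, spanSingleton_inv, inv_inv]

theorem inv_inv_inf_eq (hI : I⁻¹⁻¹ = I) (hJ : J⁻¹⁻¹ = J) : (I ⊓ J)⁻¹⁻¹ = I ⊓ J := by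
  refine le_antisymm (le_inf ?_ ?_) (le_inv_inv _)
  · exact (inv_inv_mono inf_le_left).trans hI.le
  · exact (inv_inv_mono inf_le_right).trans hJ.le

theorem le_one_of_inv_eq_one (h : I⁻¹ = 1) : I ≤ 1 := by
  simpa only [h, inv_one] using le_inv_inv I

theorem mul_inv_eq_one_of_inv_eq_one (hIJ : I * J ≠ 0) (hI : I⁻¹ = 1) (hJ : J⁻¹ = 1) :
    (I * J)⁻¹ = 1 := by
  refine le_antisymm (fun x hx => ?_) ?_
  · rw [← hI, mem_inv_iff (inv_eq_zero_iff.not.mp (hI ▸ one_ne_zero))]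
    intro y hy
    rw [← hJ, mem_inv_iff (inv_eq_zero_iff.not.mp (hJ ▸ one_ne_zero))]
    intro z hz
    rw [mul_assoc]
    exact (mem_inv_iff hIJ).mp hx _ (mul_mem_mul hy hz)
  · have hle : I * J ≤ 1 := by
      simpa only [mul_one] using mul_le_mul' (le_one_of_inv_eq_one hI) (le_one_of_inv_eq_one hJ)
    simpa only [inv_one] using inv_anti_mono hIJ one_ne_zero hle

theorem inv_coeIdeal_pow_eq_one {J : Ideal D} (hJ : (J : FractionalIdeal D⁰ K)⁻¹ = 1) :
    ∀ n : ℕ, ((J ^ n : Ideal D) : FractionalIdeal D⁰ K)⁻¹ = 1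
  | 0 => by rw [pow_zero, Ideal.one_eq_top, coeIdeal_top, inv_one]
  | n + 1 => by
    have hJ0 : J ≠ ⊥ := by
      rintro rfl
      rw [coeIdeal_bot, inv_zero'] at hJ
      exact zero_ne_one hJ
    rw [pow_succ, coeIdeal_mul]
    refine mul_inv_eq_one_of_inv_eq_one ?_ (inv_coeIdeal_pow_eq_one hJ n) hJ
    rw [← coeIdeal_mul, ← pow_succ, Ne, coeIdeal_eq_zero]
    exact pow_ne_zero _ hJ0

theorem coeIdeal_colon_span_singleton (a : D) {b : D} (hb : b ≠ 0) :
    (((Ideal.span {a}).colon (Ideal.span {b}) : Ideal D) : FractionalIdeal D⁰ K) =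
      spanSingleton D⁰ (algebraMap D K a / algebraMap D K b) ⊓ 1 := by
  have hb' : algebraMap D K b ≠ 0 := IsFractionRing.to_map_ne_zero_of_mem_nonZeroDivisors
    (mem_nonZeroDivisors_of_ne_zero hb)
  ext x
  simp only [mem_coeIdeal, Ideal.mem_colon_span_singleton, Ideal.mem_span_singleton']
  change _ ↔ x ∈ spanSingleton D⁰ _ ∧ x ∈ (1 : FractionalIdeal D⁰ K)
  rw [mem_spanSingleton, mem_one_iff]
  constructor
  · rintro ⟨r, ⟨d, hd⟩, rfl⟩
    refine ⟨⟨d, ?_⟩, r, rfl⟩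
    rw [Algebra.smul_def, ← mul_div_assoc, div_eq_iff hb', ← map_mul, ← map_mul, hd]
  · rintro ⟨⟨d, rfl⟩, r, hr⟩
    refine ⟨r, ⟨d, IsFractionRing.injective D K ?_⟩, hr⟩
    rw [map_mul, map_mul, hr, Algebra.smul_def]
    field_simp

end FractionalIdeal

section tClos

open FractionalIdeal

variable {D : Type*} [CommRing D] [IsDomain D]

theorem inv_inv_le_tClos {E F : FractionalIdeal D⁰ (FractionRing D)} (hF0 : F ≠ 0) (hFE : F ≤ E)
    (hF : (F : Submodule D (FractionRing D)).FG) :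
    ((F⁻¹⁻¹ : FractionalIdeal D⁰ (FractionRing D)) : Submodule D (FractionRing D)) ≤ tClos D E :=
  le_iSup₂ (f := fun F _ => ((F⁻¹⁻¹ : FractionalIdeal D⁰ (FractionRing D)) :
    Submodule D (FractionRing D))) F ⟨hF0, hFE, hF⟩

theorem le_tClos (E : FractionalIdeal D⁰ (FractionRing D)) :
    (E : Submodule D (FractionRing D)) ≤ tClos D E := by
  intro x hx
  rcases eq_or_ne x 0 with rfl | hx0
  · exact zero_mem _
  refine inv_inv_le_tClos (spanSingleton_ne_zero_iff.mpr hx0) (spanSingleton_le_iff_mem.mpr hx)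
    (coe_spanSingleton D⁰ x ▸ Submodule.fg_span_singleton x) ?_
  exact le_inv_inv _ (mem_spanSingleton_self _ _)

theorem Ideal.isT_iff {I : Ideal D} : I.IsT ↔ ∀ F : FractionalIdeal D⁰ (FractionRing D),
    F ≤ I → (F : Submodule D (FractionRing D)).FG → F⁻¹⁻¹ ≤ I := by
  refine ⟨fun hI F hFI hF => ?_, fun h => le_antisymm (le_tClos _) ?_⟩
  · rcases eq_or_ne F 0 with rfl | hF0
    · simp only [inv_zero', FractionalIdeal.zero_le]
    rw [← coe_le_coe, hI]
    exact inv_inv_le_tClos hF0 hFI hF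
  · exact iSup₂_le fun F ⟨_, hFI, hF⟩ => coe_le_coe.mpr (h F hFI hF)

end tClos

namespace Ideal

open FractionalIdeal

variable {D : Type*} [CommRing D] [IsDomain D]

theorem isT_of_inv_inv_eq {I : Ideal D}
    (h : (I : FractionalIdeal D⁰ (FractionRing D))⁻¹⁻¹ = I) : I.IsT :=
  isT_iff.mpr fun _ hFI _ => (inv_inv_mono hFI).trans h.le

theorem isT_span_singleton (a : D) : (span {a}).IsT :=
  isT_of_inv_inv_eq (by rw [coeIdeal_span_singleton (S := D⁰), inv_inv_spanSingleton])

theorem isT_colon_span_singleton (a : D) {b : D} (hb : b ≠ 0) :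
    ((span {a}).colon (span {b})).IsT :=
  isT_of_inv_inv_eq (by
    rw [coeIdeal_colon_span_singleton a hb,
      inv_inv_inf_eq (inv_inv_spanSingleton _) (by rw [inv_one, inv_one])])

end Ideal

theorem IsLocalRing.maximalIdeal_le_radical_of_mem_minimalPrimes {R : Type*} [CommRing R]
    [IsLocalRing R] {I : Ideal R} (h : IsLocalRing.maximalIdeal R ∈ I.minimalPrimes) :
    IsLocalRing.maximalIdeal R ≤ I.radical := by
  rw [← Ideal.sInf_minimalPrimes]
  exact le_sInf fun Q hQ => h.2 hQ.1 (IsLocalRing.le_maximalIdeal hQ.1.1.ne_top)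

namespace Ideal.IsT

open FractionalIdeal IsLocalRing

variable {D : Type*} [CommRing D] [IsDomain D] [IsLocalRing D] {I : Ideal D}

theorem isT_maximalIdeal_of_le_radical (hI : I.IsT) (hIM : I ≤ maximalIdeal D)
    (hMI : maximalIdeal D ≤ I.radical) : (maximalIdeal D).IsT := by
  refine isT_iff.mpr fun F hFM hFfg => ?_
  obtain ⟨J, rfl⟩ := le_one_iff_exists_coeIdeal.mp (hFM.trans coeIdeal_le_one)
  by_contra hJM
  have hJinv : (J : FractionalIdeal D⁰ (FractionRing D))⁻¹ = 1 := by
    rw [← inv_inv_inv, eq_one_of_le_one_of_not_le_maximalIdeal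
      ((inv_inv_mono coeIdeal_le_one).trans_eq (by rw [inv_one, inv_one])) hJM, inv_one]
  have hJfg : J.FG := (coeIdeal_fg D⁰ (IsFractionRing.injective D _) J).mp hFfg
  obtain ⟨n, hn⟩ := exists_pow_le_of_le_radical_of_fg
    (((coeIdeal_le_coeIdeal _).mp hFM).trans hMI) hJfg
  have hone : (1 : FractionalIdeal D⁰ (FractionRing D)) ≤ I := by
    simpa only [inv_coeIdeal_pow_eq_one hJinv n, inv_one] using
      isT_iff.mp hI _ ((coeIdeal_le_coeIdeal _).mpr hn)
        ((coeIdeal_fg D⁰ (IsFractionRing.injective D _) _).mpr (hJfg.pow (n := n)))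
  rw [← coeIdeal_top, coeIdeal_le_coeIdeal, top_le_iff] at hone
  exact (maximalIdeal.isMaximal D).ne_top (top_le_iff.mp (hone ▸ hIM))

theorem isT_maximalIdeal_of_mem_minimalPrimes (hI : I.IsT)
    (h : maximalIdeal D ∈ I.minimalPrimes) : (maximalIdeal D).IsT :=
  hI.isT_maximalIdeal_of_le_radical h.1.2 (maximalIdeal_le_radical_of_mem_minimalPrimes h)

end Ideal.IsT

/-- Let `(D, M)` be a local integral domain. Then `D` is `t`-local (i.e. `M` is a
`t`-ideal) in each of the following situations:
(1) `M` is minimal over an integral `t`-ideal of `D`;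
(2) `M` is an associated prime over a principal ideal, i.e. `M` is minimal over an
ideal `(aD :_D bD)` with `a ≠ 0` and `b ∉ aD`;
(3) `M` is minimal over a nonzero principal ideal;
(4) `M` is principal;
(5) `D` is `1`-dimensional. -/
theorem t_local_sufficient_conditions {D : Type*} [CommRing D] [IsDomain D] [IsLocalRing D] :
    ((∃ I : Ideal D, I ≠ ⊥ ∧ I.IsT ∧ IsLocalRing.maximalIdeal D ∈ I.minimalPrimes) →
        (IsLocalRing.maximalIdeal D).IsT) ∧
    ((∃ a b : D, a ≠ 0 ∧ b ∉ Ideal.span {a} ∧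
        IsLocalRing.maximalIdeal D ∈ ((Ideal.span {a}).colon (Ideal.span {b})).minimalPrimes) →
        (IsLocalRing.maximalIdeal D).IsT) ∧
    ((∃ a : D, a ≠ 0 ∧ IsLocalRing.maximalIdeal D ∈ (Ideal.span {a}).minimalPrimes) →
        (IsLocalRing.maximalIdeal D).IsT) ∧
    ((IsLocalRing.maximalIdeal D).IsPrincipal → (IsLocalRing.maximalIdeal D).IsT) ∧
    (ringKrullDim D = 1 → (IsLocalRing.maximalIdeal D).IsT) := by
  refine ⟨?_, ?_, ?_, ?_, ?_⟩
  · rintro ⟨I, -, hI, hM⟩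
    exact hI.isT_maximalIdeal_of_mem_minimalPrimes hM
  · rintro ⟨a, b, -, hb, hM⟩
    have hb0 : b ≠ 0 := fun h => hb (h ▸ Ideal.zero_mem _)
    exact (Ideal.isT_colon_span_singleton a hb0).isT_maximalIdeal_of_mem_minimalPrimes hM
  · rintro ⟨a, -, hM⟩
    exact (Ideal.isT_span_singleton a).isT_maximalIdeal_of_mem_minimalPrimes hM
  · rintro ⟨a, hM⟩
    rw [hM, Ideal.submodule_span_eq]
    exact Ideal.isT_span_singleton a
  · intro hdim
    obtain ⟨hD, hM⟩ := ringKrullDim_eq_one_iff_of_isLocalRing_isDomain.mp hdim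
    obtain ⟨x, hxM, hx0⟩ := (Submodule.ne_bot_iff _).mp
      (mt IsLocalRing.isField_iff_maximalIdeal_eq.mpr hD)
    exact (Ideal.isT_span_singleton x).isT_maximalIdeal_of_le_radical
      ((Ideal.span_singleton_le_iff_mem _).mpr hxM) (hM x hx0)
end

section
/- An atomic integral domain that contains a nonzero nonunit comparable element is a discrete valuation ring (DVR). Moreover, the maximal ideal is generated by a prime element h which is an irreducible factor of the comparable element, and every nonzero nonunit of D has the form (unit)·h^n for some n ≥ 1. -/
/-!
Comparability passes from `c = h * m` to an irreducible factor `h`, since `x ∣ h ↔ x * m ∣ c`.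
An irreducible `h` comparable with every element is associated to every irreducible, so by
atomicity every nonzero element is associated to a power of `h`, which characterises a DVR
with uniformizer `h`; in a DVR the irreducible `h` is prime and generates the maximal ideal.
-/

open scoped nonZeroDivisors

/-- A nonzero element `c` of a domain `D` is comparable if for every `x ∈ D`,
either `cD ⊆ xD` or `xD ⊆ cD`. -/
def IsComparable {D : Type*} [CommRing D] (c : D) : Prop :=
  c ≠ 0 ∧ ∀ x : D, Ideal.span {c} ≤ Ideal.span {x} ∨ Ideal.span {x} ≤ Ideal.span {c}

theorem IsComparable.dvd_or_dvd {D : Type*} [CommRing D] {c : D} (hc : IsComparable c)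
    (x : D) : x ∣ c ∨ c ∣ x :=
  (hc.2 x).imp Ideal.span_singleton_le_span_singleton.mp
    Ideal.span_singleton_le_span_singleton.mp

theorem dvd_or_dvd_of_mul_right {M : Type*} [CommMonoidWithZero M] [IsCancelMulZero M] {a m : M}
    (hm : m ≠ 0) (h : ∀ x, x ∣ a * m ∨ a * m ∣ x) (x : M) : x ∣ a ∨ a ∣ x :=
  (h (x * m)).imp (mul_dvd_mul_iff_right hm).mp (mul_dvd_mul_iff_right hm).mp

theorem Multiset.exists_irreducible_dvd_prod {M : Type*} [CommMonoid M] {l : Multiset M}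
    (hl : ∀ b ∈ l, Irreducible b) (hu : ¬IsUnit l.prod) : ∃ p, Irreducible p ∧ p ∣ l.prod := by
  have hl0 : l ≠ 0 := by rintro rfl; simp at hu
  obtain ⟨p, hp⟩ := Multiset.exists_mem_of_ne_zero hl0
  exact ⟨p, hl p hp, Multiset.dvd_prod hp⟩

theorem Multiset.associated_pow_card_prod {M : Type*} [CommMonoid M] {p : M} {l : Multiset M}
    (hl : ∀ b ∈ l, Associated p b) : Associated (p ^ Multiset.card l) l.prod := by
  induction l using Multiset.induction with
  | empty => simp
  | cons a s ih =>
    rw [Multiset.card_cons, Multiset.prod_cons, pow_succ']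
    exact (hl a (Multiset.mem_cons_self a s)).mul_mul
      (ih fun b hb => hl b (Multiset.mem_cons_of_mem hb))

theorem hasUnitMulPowIrreducibleFactorization_of_forall_associated {R : Type*} [CommRing R]
    (hatomic : ∀ a : R, a ≠ 0 → ¬ IsUnit a →
      ∃ l : Multiset R, (∀ b ∈ l, Irreducible b) ∧ l.prod = a)
    {p : R} (hp : Irreducible p) (hassoc : ∀ q : R, Irreducible q → Associated p q) :
    IsDiscreteValuationRing.HasUnitMulPowIrreducibleFactorization R := by
  refine ⟨p, hp, fun {x} hx => ?_⟩
  by_cases hxu : IsUnit x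
  · exact ⟨0, by simpa using (associated_one_iff_isUnit.mpr hxu).symm⟩
  · obtain ⟨l, hl, rfl⟩ := hatomic x hx hxu
    exact ⟨_, Multiset.associated_pow_card_prod fun b hb => hassoc b (hl b hb)⟩

/-- An atomic integral domain containing a nonzero nonunit comparable element `c` is a
DVR; moreover its maximal ideal is generated by a prime (irreducible) factor `h` of
`c`, and every nonzero nonunit of `D` is of the form `u * h ^ n` with `u` a unit and
`n ≥ 1`. -/
theorem dvr_of_atomic_with_comparable (D : Type*) [CommRing D] [IsDomain D]
    (hatomic : ∀ a : D, a ≠ 0 → ¬ IsUnit a →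
      ∃ l : Multiset D, (∀ b ∈ l, Irreducible b) ∧ l.prod = a)
    (c : D) (hc : IsComparable c) (hcu : ¬ IsUnit c) :
    IsDiscreteValuationRing D ∧
      ∃ h : D, Irreducible h ∧ Prime h ∧ h ∣ c ∧ (Ideal.span {h}).IsMaximal ∧
        ∀ a : D, a ≠ 0 → ¬ IsUnit a →
          ∃ (u : Dˣ) (n : ℕ), 1 ≤ n ∧ a = (u : D) * h ^ n := by
  obtain ⟨h, hirr, m, rfl⟩ : ∃ h, Irreducible h ∧ h ∣ c := by
    obtain ⟨l, hl, rfl⟩ := hatomic c hc.1 hcu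
    exact Multiset.exists_irreducible_dvd_prod hl hcu
  have hcomp : ∀ x, x ∣ h ∨ h ∣ x :=
    dvd_or_dvd_of_mul_right (right_ne_zero_of_mul hc.1) hc.dvd_or_dvd
  have hassoc (q : D) (hq : Irreducible q) : Associated h q :=
    (hcomp q).elim (fun hqh => (hq.associated_of_dvd hirr hqh).symm) (hirr.associated_of_dvd hq)
  have : IsDiscreteValuationRing D :=
    .ofHasUnitMulPowIrreducibleFactorization
      (hasUnitMulPowIrreducibleFactorization_of_forall_associated hatomic hirr hassoc)
  refine ⟨this, h, hirr, hirr.prime, dvd_mul_right h m,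
    hirr.maximalIdeal_eq ▸ IsLocalRing.maximalIdeal.isMaximal D, fun a ha hau => ?_⟩
  obtain ⟨n, u, rfl⟩ := IsDiscreteValuationRing.eq_unit_mul_pow_irreducible ha hirr
  refine ⟨u, n, Nat.one_le_iff_ne_zero.mpr ?_, rfl⟩
  rintro rfl
  simp at hau
end
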